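/- For a diagram N ⊆ ℕ^n (N + ℕ^n = N) and α ∈ ℕ^n, define N(α) = ℕ^n + {β ∈ N : β ≤ α} and N^-(α) = ℕ^n + {β ∈ N : β < α}, with ≤ the graded lexicographic-type total order. For diagrams N₁, N₂ ordered by comparing their increasing sequences of vertices lexicographically, the following are equivalent: (1) N₁(α) < N₂(α); (2) there exists θ ≤ α with N₁^-(θ) = N₂^-(θ), θ ∈ N₁(θ), and θ ∉ N₂(θ). -/

import Mathlib

/-!
Comparing two increasing sequences lexicographically, with `+∞` padding, amounts to finding the
least value at which their ranges differ and asking which range contains it. For the vertex sets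
of the upper sets `N₁(α)`, `N₂(α)` of the well-founded order `ℕ^n`, whose degree-lexicographic
key is a strictly monotone linear extension, that least value is the least point at which
`N₁(α)` and `N₂(α)` themselves differ. Finally, for `θ ≤ α` the diagrams `N(α)` and `N^-(θ)`
contain the same points below `θ`, and `θ ∈ N(α)` iff `θ ∈ N(θ)`.
-/

/-- The key `(|α|, α₁, …, α_n)` of a multi-index, compared lexicographically. -/
def dlKey {n : ℕ} (a : Fin n →₀ ℕ) : ℕ ×ₗ Lex (Fin n →₀ ℕ) :=
  toLex ((∑ i, a i : ℕ), toLex a)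

/-- Total-degree-then-lexicographic strict comparison `α < β` on multi-indices. -/
def degLexLt {n : ℕ} (a b : Fin n →₀ ℕ) : Prop := dlKey a < dlKey b

/-- Total-degree-then-lexicographic comparison `α ≤ β` on multi-indices. -/
def degLexLe {n : ℕ} (a b : Fin n →₀ ℕ) : Prop := dlKey a ≤ dlKey b

/-- The translated cone `a + ℕ^n`. -/
def cone {n : ℕ} (a : Fin n →₀ ℕ) : Set (Fin n →₀ ℕ) :=
  {x | ∃ c : Fin n →₀ ℕ, x = a + c}

/-- `N(α) = ℕ^n + {β ∈ N : β ≤ α}`. -/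
def diagAt {n : ℕ} (N : Set (Fin n →₀ ℕ)) (α : Fin n →₀ ℕ) : Set (Fin n →₀ ℕ) :=
  {x | ∃ b ∈ N, degLexLe b α ∧ ∃ c : Fin n →₀ ℕ, x = b + c}

/-- `N^-(α) = ℕ^n + {β ∈ N : β < α}`. -/
def diagBelow {n : ℕ} (N : Set (Fin n →₀ ℕ)) (α : Fin n →₀ ℕ) : Set (Fin n →₀ ℕ) :=
  {x | ∃ b ∈ N, degLexLt b α ∧ ∃ c : Fin n →₀ ℕ, x = b + c}

/-- `v` is a vertex of the diagram `D`: an element of `D` not of the form `b + c` for any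
other element `b` of `D` (i.e. a minimal generator). -/
def IsVertex {n : ℕ} (D : Set (Fin n →₀ ℕ)) (v : Fin n →₀ ℕ) : Prop :=
  v ∈ D ∧ ∀ b ∈ D, (∃ c : Fin n →₀ ℕ, v = b + c) → b = v

/-- The increasing vertex list of a diagram, padded by `+∞` to an infinite sequence of
keys. -/
def padVert {n s : ℕ} (w : Fin s → (Fin n →₀ ℕ)) : ℕ → WithTop (ℕ ×ₗ Lex (Fin n →₀ ℕ)) :=
  fun j => if h : j < s then (WithTop.some (dlKey (w ⟨j, h⟩))) else ⊤

/-- The lexicographic comparison of diagrams via their increasing sequences of vertices,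
with missing entries of the shorter list counted as `+∞`. -/
def DiagLexLt {n s₁ s₂ : ℕ} (w₁ : Fin s₁ → (Fin n →₀ ℕ)) (w₂ : Fin s₂ → (Fin n →₀ ℕ)) :
    Prop :=
  ∃ j : ℕ, (∀ i < j, padVert w₁ i = padVert w₂ i) ∧ padVert w₁ j < padVert w₂ j

section FirstDifference

variable {γ β : Type*} [LinearOrder β]

def IsFirstDifference (key : γ → β) (A B : Set γ) (θ : γ) : Prop :=
  θ ∈ A ∧ θ ∉ B ∧ ∀ x, key x < key θ → (x ∈ A ↔ x ∈ B)

lemma exists_isFirstDifference_image_iff {key : γ → β} (hkey : Function.Injective key)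
    {A B : Set γ} :
    (∃ x, IsFirstDifference id (key '' A) (key '' B) x) ↔ ∃ θ, IsFirstDifference key A B θ := by
  constructor
  · rintro ⟨_, ⟨θ, hθA, rfl⟩, hθB, hagree⟩
    refine ⟨θ, hθA, fun hθ => hθB ⟨θ, hθ, rfl⟩, fun x hx => ?_⟩
    simpa only [hkey.mem_set_image] using hagree (key x) hx
  · rintro ⟨θ, hθA, hθB, hagree⟩
    refine ⟨key θ, ⟨θ, hθA, rfl⟩, hkey.mem_set_image.not.2 hθB, ?_⟩
    rintro y hy
    constructor
    · rintro ⟨x, hx, rfl⟩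
      exact ⟨x, (hagree x hy).1 hx, rfl⟩
    · rintro ⟨x, hx, rfl⟩
      exact ⟨x, (hagree x hy).2 hx, rfl⟩

variable [PartialOrder γ] {key : γ → β} {D₁ D₂ : Set γ} {θ : γ}

lemma minimal_mem_congr {A B : Set γ} {u : γ} (h : ∀ x ≤ u, (x ∈ A ↔ x ∈ B)) :
    Minimal (· ∈ A) u ↔ Minimal (· ∈ B) u :=
  ⟨fun ⟨hu, hmin⟩ => ⟨(h u le_rfl).1 hu, fun x hx hxu => hmin ((h x hxu).2 hx) hxu⟩,
    fun ⟨hu, hmin⟩ => ⟨(h u le_rfl).2 hu, fun x hx hxu => hmin ((h x hxu).1 hx) hxu⟩⟩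

theorem isFirstDifference_minimal_iff [WellFoundedLT γ] (hkey : StrictMono key)
    (h₁ : IsUpperSet D₁) (h₂ : IsUpperSet D₂) :
    IsFirstDifference key {u | Minimal (· ∈ D₁) u} {u | Minimal (· ∈ D₂) u} θ ↔
      IsFirstDifference key D₁ D₂ θ := by
  constructor
  · rintro ⟨hθ₁, hθ₂, hagree⟩
    have transfer : ∀ {A B : Set γ}, IsUpperSet B →
        (∀ u, key u < key θ → Minimal (· ∈ A) u → Minimal (· ∈ B) u) →
        ∀ x, key x < key θ → x ∈ A → x ∈ B := by
      intro A B hB h x hx hxA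
      obtain ⟨u, hux, hu⟩ := exists_minimal_le_of_wellFoundedLT _ x hxA
      exact hB hux (h u ((hkey.monotone hux).trans_lt hx) hu).1
    refine ⟨hθ₁.1, fun hθ => ?_, fun x hx =>
      ⟨transfer h₂ (fun u hu => (hagree u hu).1) x hx,
        transfer h₁ (fun u hu => (hagree u hu).2) x hx⟩⟩
    obtain ⟨u, huθ, hu⟩ := exists_minimal_le_of_wellFoundedLT _ θ hθ
    rcases huθ.lt_or_eq with hlt | rfl
    · exact hlt.ne (hθ₁.eq_of_le ((hagree u (hkey hlt)).2 hu).1 hlt.le)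
    · exact hθ₂ hu
  · rintro ⟨hθ₁, hθ₂, hagree⟩
    refine ⟨⟨hθ₁, fun y hy hyθ => ?_⟩, fun h => hθ₂ h.1, fun u hu => ?_⟩
    · by_contra hθy
      exact hθ₂ (h₂ hyθ ((hagree y (hkey (lt_of_le_not_ge hyθ hθy))).1 hy))
    · exact minimal_mem_congr fun x hxu => hagree x ((hkey.monotone hxu).trans_lt hu)

end FirstDifference

section PaddedSequences

variable {β : Type*} {s t : ℕ}

def padTop (f : Fin s → β) (j : ℕ) : WithTop β :=
  if h : j < s then f ⟨j, h⟩ else ⊤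

lemma padTop_of_lt (f : Fin s → β) {j : ℕ} (h : j < s) : padTop f j = f ⟨j, h⟩ := dif_pos h

lemma padTop_of_le (f : Fin s → β) {j : ℕ} (h : s ≤ j) : padTop f j = ⊤ := dif_neg h.not_gt

lemma lt_of_padTop_ne_top {f : Fin s → β} {j : ℕ} (h : padTop f j ≠ ⊤) : j < s :=
  not_le.1 fun hj => h (padTop_of_le f hj)

lemma mem_range_of_padTop_eq {f : Fin s → β} {j : ℕ} {y : β} (h : padTop f j = y) :
    y ∈ Set.range f := by
  have hj := lt_of_padTop_ne_top (h ▸ WithTop.coe_ne_top)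
  exact ⟨⟨j, hj⟩, WithTop.coe_injective ((padTop_of_lt f hj).symm.trans h)⟩

variable [LinearOrder β]

lemma StrictMono.monotone_padTop {f : Fin s → β} (hf : StrictMono f) : Monotone (padTop f) := by
  intro i j hij
  by_cases hj : j < s
  · rw [padTop_of_lt f (hij.trans_lt hj), padTop_of_lt f hj]
    exact WithTop.coe_le_coe.2 (hf.monotone hij)
  · rw [padTop_of_le f (not_lt.1 hj)]
    exact le_top

lemma StrictMono.card_range_lt {f : Fin s → β} (hf : StrictMono f) (i : Fin s) :
    (Finset.univ.image f |>.filter (· < f i)).card = i := by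
  rw [Finset.filter_image, Finset.card_image_of_injective _ hf.injective, ← Fin.card_Iio]
  congr 1
  ext k
  simp [hf.lt_iff_lt]

-- Both indices count the values below `f i`, which the two ranges share.
lemma StrictMono.index_eq_of_range_agree {f : Fin s → β} {g : Fin t → β} (hf : StrictMono f)
    (hg : StrictMono g) {i : Fin s} {k : Fin t} (hik : f i = g k)
    (hagree : ∀ y < f i, (y ∈ Set.range f ↔ y ∈ Set.range g)) : (i : ℕ) = k := by
  rw [← hf.card_range_lt, ← hg.card_range_lt, ← hik]
  congr 1
  ext y
  simp only [Finset.mem_filter, Finset.mem_image, Finset.mem_univ, true_and]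
  exact and_congr_left fun hy => hagree y hy

lemma exists_isFirstDifference_of_padTop_lexLt {f : Fin s → β} {g : Fin t → β}
    (hf : StrictMono f) (hg : StrictMono g) {j : ℕ} (hagree : ∀ i < j, padTop f i = padTop g i)
    (hlt : padTop f j < padTop g j) : ∃ x, IsFirstDifference id (Set.range f) (Set.range g) x := by
  have hj : j < s := lt_of_padTop_ne_top (ne_top_of_lt hlt)
  set x := f ⟨j, hj⟩
  have hfj : padTop f j = x := padTop_of_lt f hj
  have hg_le : ∀ k : Fin t, g k ≤ x → g k ∈ Set.range f ∧ g k < x := by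
    intro k hk
    have hkj : (k : ℕ) < j := by
      by_contra! hjk
      have := hg.monotone_padTop hjk
      rw [padTop_of_lt g k.2] at this
      exact (hlt.trans_le this).not_ge (hfj ▸ WithTop.coe_le_coe.2 hk)
    have hfk : padTop f k = g k := (hagree k hkj).trans (padTop_of_lt g k.2)
    refine ⟨mem_range_of_padTop_eq hfk, ?_⟩
    rw [padTop_of_lt f (hkj.trans hj)] at hfk
    exact WithTop.coe_injective hfk ▸ hf hkj
  refine ⟨x, ⟨_, rfl⟩, fun ⟨k, hk⟩ => (hg_le k hk.le).2.ne hk, fun y hy => ⟨?_, ?_⟩⟩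
  · rintro ⟨i, rfl⟩
    have hij : (i : ℕ) < j := hf.lt_iff_lt.1 hy
    exact mem_range_of_padTop_eq ((hagree i hij).symm.trans (padTop_of_lt f i.2))
  · rintro ⟨k, rfl⟩
    exact (hg_le k hy.le).1

lemma padTop_lexLt_of_isFirstDifference {f : Fin s → β} {g : Fin t → β} (hf : StrictMono f)
    (hg : StrictMono g) {j : Fin s} (h : IsFirstDifference id (Set.range f) (Set.range g) (f j)) :
    (∀ i < (j : ℕ), padTop f i = padTop g i) ∧ padTop f j < padTop g j := by
  obtain ⟨-, hx, hagree⟩ := h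
  have hindex : ∀ {i : Fin s} {k : Fin t}, f i = g k → f i ≤ f j → (i : ℕ) = k :=
    fun hik hij => hf.index_eq_of_range_agree hg hik fun y hy => hagree y (hy.trans_le hij)
  refine ⟨fun i hij => ?_, ?_⟩
  · obtain ⟨k, hk⟩ := (hagree (f ⟨i, hij.trans j.2⟩) (hf hij)).1 ⟨_, rfl⟩
    obtain rfl : i = k := hindex hk.symm (hf.monotone hij.le)
    rw [padTop_of_lt f (hij.trans j.2), ← hk]
    exact (padTop_of_lt g k.2).symm
  · rw [padTop_of_lt f j.2]
    by_cases hjt : (j : ℕ) < t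
    · rw [padTop_of_lt g hjt, WithTop.coe_lt_coe]
      refine lt_of_not_ge fun hle => ?_
      obtain ⟨i, hi⟩ := (hagree _ (hle.lt_of_ne fun h => hx ⟨_, h⟩)).2 ⟨_, rfl⟩
      obtain rfl : i = j := Fin.ext (hindex hi (hi ▸ hle))
      exact hx ⟨_, hi.symm⟩
    · rw [padTop_of_le g (not_lt.1 hjt)]
      exact WithTop.coe_lt_top _

theorem padTop_lexLt_iff {f : Fin s → β} {g : Fin t → β} (hf : StrictMono f)
    (hg : StrictMono g) :
    (∃ j, (∀ i < j, padTop f i = padTop g i) ∧ padTop f j < padTop g j) ↔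
      ∃ x, IsFirstDifference id (Set.range f) (Set.range g) x := by
  refine ⟨fun ⟨_, hagree, hlt⟩ => exists_isFirstDifference_of_padTop_lexLt hf hg hagree hlt, ?_⟩
  rintro ⟨_, h⟩
  obtain ⟨j, rfl⟩ := h.1
  exact ⟨j, padTop_lexLt_of_isFirstDifference hf hg h⟩

end PaddedSequences

section Diagrams

variable {n : ℕ} {N N₁ N₂ : Set (Fin n →₀ ℕ)} {α θ x v : Fin n →₀ ℕ}

lemma dlKey_strictMono : StrictMono (dlKey (n := n)) := by
  intro a b hab
  have hsum : ∑ i, a i < ∑ i, b i := by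
    obtain ⟨i, hi⟩ : ∃ i, a i < b i := by
      by_contra! h
      exact hab.ne (le_antisymm hab.le h)
    exact Finset.sum_lt_sum (fun j _ => hab.le j) ⟨i, Finset.mem_univ i, hi⟩
  exact Prod.Lex.toLex_lt_toLex.2 (Or.inl hsum)

lemma dlKey_injective : Function.Injective (dlKey (n := n)) := fun _ _ h =>
  toLex_inj.1 (congrArg Prod.snd (toLex_inj.1 h))

lemma isVertex_iff_minimal {D : Set (Fin n →₀ ℕ)} : IsVertex D v ↔ Minimal (· ∈ D) v := by
  simp only [IsVertex, minimal_mem_iff, le_iff_exists_add]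
  exact and_congr_right fun _ => forall₂_congr fun _ _ => imp_congr_right fun _ => eq_comm

lemma isUpperSet_diagAt : IsUpperSet (diagAt N α) := by
  rintro _ y hxy ⟨b, hb, hbα, c, rfl⟩
  obtain ⟨d, rfl⟩ := exists_add_of_le hxy
  exact ⟨b, hb, hbα, c + d, add_assoc b c d⟩

lemma isUpperSet_diagBelow : IsUpperSet (diagBelow N θ) := by
  rintro _ y hxy ⟨b, hb, hbθ, c, rfl⟩
  obtain ⟨d, rfl⟩ := exists_add_of_le hxy
  exact ⟨b, hb, hbθ, c + d, add_assoc b c d⟩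

lemma Minimal.degLexLe_of_mem_diagAt (h : Minimal (· ∈ diagAt N α) v) : degLexLe v α := by
  obtain ⟨b, hb, hbα, c, hv⟩ := h.1
  obtain rfl : b = v := h.eq_of_le ⟨b, hb, hbα, 0, (add_zero b).symm⟩ (hv ▸ le_self_add)
  exact hbα

lemma mem_diagAt_self_iff (hθ : degLexLe θ α) : θ ∈ diagAt N θ ↔ θ ∈ diagAt N α :=
  ⟨fun ⟨b, hb, hbθ, c, h⟩ => ⟨b, hb, le_trans hbθ hθ, c, h⟩,
    fun ⟨b, hb, _, c, h⟩ => ⟨b, hb, dlKey_strictMono.monotone (h ▸ le_self_add), c, h⟩⟩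

lemma mem_diagBelow_iff_of_lt (hθ : degLexLe θ α) (hx : degLexLt x θ) :
    x ∈ diagBelow N θ ↔ x ∈ diagAt N α :=
  ⟨fun ⟨b, hb, hbθ, c, h⟩ => ⟨b, hb, (lt_of_lt_of_le hbθ hθ).le, c, h⟩,
    fun ⟨b, hb, _, c, h⟩ =>
      ⟨b, hb, lt_of_le_of_lt (dlKey_strictMono.monotone (h ▸ le_self_add)) hx, c, h⟩⟩

lemma diagBelow_eq_iff (hθ : degLexLe θ α) :
    diagBelow N₁ θ = diagBelow N₂ θ ↔
      ∀ x, degLexLt x θ → (x ∈ diagAt N₁ α ↔ x ∈ diagAt N₂ α) := by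
  refine ⟨fun h x hx => by rw [← mem_diagBelow_iff_of_lt hθ hx, h, mem_diagBelow_iff_of_lt hθ hx],
    fun h => ?_⟩
  -- `diagBelow N θ` is generated by its own elements below `θ`
  have hsubset : ∀ {N N' : Set (Fin n →₀ ℕ)},
      (∀ x, degLexLt x θ → x ∈ diagAt N α → x ∈ diagAt N' α) → diagBelow N θ ⊆ diagBelow N' θ := by
    rintro N N' hNN' _ ⟨b, hb, hbθ, c, rfl⟩
    have hb' : b ∈ diagBelow N θ := ⟨b, hb, hbθ, 0, (add_zero b).symm⟩
    rw [mem_diagBelow_iff_of_lt hθ hbθ] at hb'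
    exact isUpperSet_diagBelow le_self_add ((mem_diagBelow_iff_of_lt hθ hbθ).2 (hNN' b hbθ hb'))
  exact (hsubset fun x hx => (h x hx).1).antisymm (hsubset fun x hx => (h x hx).2)

theorem isFirstDifference_diagAt_iff :
    IsFirstDifference dlKey (diagAt N₁ α) (diagAt N₂ α) θ ↔
      degLexLe θ α ∧ diagBelow N₁ θ = diagBelow N₂ θ ∧ θ ∈ diagAt N₁ θ ∧ θ ∉ diagAt N₂ θ := by
  have iff_of_le (hθ : degLexLe θ α) : IsFirstDifference dlKey (diagAt N₁ α) (diagAt N₂ α) θ ↔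
      diagBelow N₁ θ = diagBelow N₂ θ ∧ θ ∈ diagAt N₁ θ ∧ θ ∉ diagAt N₂ θ := by
    rw [diagBelow_eq_iff hθ, mem_diagAt_self_iff hθ, mem_diagAt_self_iff hθ, IsFirstDifference]
    exact ⟨fun ⟨h₁, h₂, h⟩ => ⟨h, h₁, h₂⟩, fun ⟨h, h₁, h₂⟩ => ⟨h₁, h₂, h⟩⟩
  refine ⟨fun h => ?_, fun ⟨hθ, h⟩ => (iff_of_le hθ).2 h⟩
  have hmin := ((isFirstDifference_minimal_iff dlKey_strictMono isUpperSet_diagAt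
    isUpperSet_diagAt).2 h).1
  exact ⟨hmin.degLexLe_of_mem_diagAt, (iff_of_le hmin.degLexLe_of_mem_diagAt).1 h⟩

end Diagrams

theorem statement14_general {n : ℕ} (N₁ N₂ : Set (Fin n →₀ ℕ))
    (α : Fin n →₀ ℕ) {s₁ s₂ : ℕ}
    (w₁ : Fin s₁ → (Fin n →₀ ℕ)) (w₂ : Fin s₂ → (Fin n →₀ ℕ))
    (hw₁mono : ∀ i j : Fin s₁, i < j → degLexLt (w₁ i) (w₁ j))
    (hw₂mono : ∀ i j : Fin s₂, i < j → degLexLt (w₂ i) (w₂ j))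
    (hw₁ : ∀ v, IsVertex (diagAt N₁ α) v ↔ ∃ i, w₁ i = v)
    (hw₂ : ∀ v, IsVertex (diagAt N₂ α) v ↔ ∃ i, w₂ i = v) :
    DiagLexLt w₁ w₂ ↔
      ∃ θ : Fin n →₀ ℕ, degLexLe θ α ∧ diagBelow N₁ θ = diagBelow N₂ θ ∧
        θ ∈ diagAt N₁ θ ∧ θ ∉ diagAt N₂ θ := by
  have range_eq {N : Set (Fin n →₀ ℕ)} {s : ℕ} {w : Fin s → (Fin n →₀ ℕ)}
      (hw : ∀ v, IsVertex (diagAt N α) v ↔ ∃ i, w i = v) :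
      Set.range (dlKey ∘ w) = dlKey '' {v | Minimal (· ∈ diagAt N α) v} := by
    rw [Set.range_comp]
    congr 1
    ext v
    exact (hw v).symm.trans isVertex_iff_minimal
  -- `padVert w` unfolds to `padTop (dlKey ∘ w)`
  calc DiagLexLt w₁ w₂
      ↔ ∃ x, IsFirstDifference id (Set.range (dlKey ∘ w₁)) (Set.range (dlKey ∘ w₂)) x :=
        padTop_lexLt_iff (fun i j => hw₁mono i j) (fun i j => hw₂mono i j)
    _ ↔ ∃ θ, IsFirstDifference dlKey {v | Minimal (· ∈ diagAt N₁ α) v}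
          {v | Minimal (· ∈ diagAt N₂ α) v} θ := by
        rw [range_eq hw₁, range_eq hw₂]
        exact exists_isFirstDifference_image_iff dlKey_injective
    _ ↔ ∃ θ, IsFirstDifference dlKey (diagAt N₁ α) (diagAt N₂ α) θ :=
        exists_congr fun _ =>
          isFirstDifference_minimal_iff dlKey_strictMono isUpperSet_diagAt isUpperSet_diagAt
    _ ↔ _ := exists_congr fun _ => isFirstDifference_diagAt_iff

/-- For diagrams `N ⊆ ℕ^n` (`N + ℕ^n = N`) and `α ∈ ℕ^n`, set
`N(α) = ℕ^n + {β ∈ N : β ≤ α}` and `N^-(α) = ℕ^n + {β ∈ N : β < α}`, with `≤` the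
graded lexicographic-type total order.  Diagrams are compared by the lexicographic order
on their increasing vertex sequences (shorter sequences padded by `+∞`).  Given
increasing enumerations `w₁`, `w₂` of the vertices of `N₁(α)`, `N₂(α)`, the following
are equivalent: (1) `N₁(α) < N₂(α)`; (2) there exists `θ ≤ α` with
`N₁^-(θ) = N₂^-(θ)`, `θ ∈ N₁(θ)` and `θ ∉ N₂(θ)`. -/
theorem statement14 {n : ℕ} (N₁ N₂ : Set (Fin n →₀ ℕ))
    (hN₁ : {x | ∃ a ∈ N₁, ∃ c : Fin n →₀ ℕ, x = a + c} = N₁)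
    (hN₂ : {x | ∃ a ∈ N₂, ∃ c : Fin n →₀ ℕ, x = a + c} = N₂)
    (α : Fin n →₀ ℕ) {s₁ s₂ : ℕ}
    (w₁ : Fin s₁ → (Fin n →₀ ℕ)) (w₂ : Fin s₂ → (Fin n →₀ ℕ))
    (hw₁mono : ∀ i j : Fin s₁, i < j → degLexLt (w₁ i) (w₁ j))
    (hw₂mono : ∀ i j : Fin s₂, i < j → degLexLt (w₂ i) (w₂ j))
    (hw₁ : ∀ v, IsVertex (diagAt N₁ α) v ↔ ∃ i, w₁ i = v)
    (hw₂ : ∀ v, IsVertex (diagAt N₂ α) v ↔ ∃ i, w₂ i = v) :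
    DiagLexLt w₁ w₂ ↔
      ∃ θ : Fin n →₀ ℕ, degLexLe θ α ∧ diagBelow N₁ θ = diagBelow N₂ θ ∧
        θ ∈ diagAt N₁ θ ∧ θ ∉ diagAt N₂ θ :=
  statement14_general N₁ N₂ α w₁ w₂ hw₁mono hw₂mono hw₁ hw₂
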